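/- Sufficiency direction of the main proposition: let G^h be the incidence matrix of the fine digraph, α an N^h × N^H matrix with rows summing to 1 and with α_{pn} = 0 for p ∉ L_n, and G^H the incidence matrix of a coarse digraph. Suppose for every fine edge i = (p,q) the induced subgraph of the coarse graph on the vertex set C̃_i = L̃_p ∪ L̃_q is connected. Then there exists an E^h × E^H matrix β with β_{ie} = 0 for e ∉ Ĩ_i and G^h α = β G^H. -/

import Mathlib

/-! Row `i` of `Gʰ α` is `α (head i) - α (tail i)`, a vector vanishing outside `C̃_i` with total
sum zero. On a connected vertex set, every zero-sum vector is a combination of edge boundaries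
`δ (headH e) - δ (tailH e)`: write it as `∑ n, r n • (δ n - δ v)` for a fixed vertex `v` and
telescope each `δ n - δ v` along a path from `v` to `n`. The coefficients of that combination
form row `i` of `β`. -/

/-- Edge-node incidence matrix of a digraph given by tail/head maps. -/
def incidence {E V : Type*} [DecidableEq V] (tail head : E → V) : Matrix E V ℚ :=
  fun e v => (if v = head e then 1 else 0) - (if v = tail e then 1 else 0)

/-- The set `C̃_i = L̃_p ∪ L̃_q` of coarse vertices to which fine edge
`i = (p,q)` contributes. -/
def Ctil {Eh Vh VH : Type*} (tail head : Eh → Vh) (L : VH → Set Vh)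
    (i : Eh) (n : VH) : Prop :=
  tail i ∈ L n ∨ head i ∈ L n

/-- One step of the undirected adjacency relation inside the subgraph of the
coarse graph induced by the vertex set `P`. -/
def inducedAdj {EH VH : Type*} (tailH headH : EH → VH) (P : VH → Prop)
    (a b : VH) : Prop :=
  P a ∧ P b ∧ ∃ e : EH, (tailH e = a ∧ headH e = b) ∨ (tailH e = b ∧ headH e = a)

open Matrix Relation

section InducedBoundaries

variable {EH VH : Type*} [DecidableEq VH] (tailH headH : EH → VH) (P : VH → Prop)

theorem incidence_row (e : EH) :
    incidence tailH headH e = Pi.single (headH e) 1 - Pi.single (tailH e) 1 := by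
  ext v
  simp [incidence, Pi.single_apply]

def inducedBoundaries : Submodule ℚ (VH → ℚ) :=
  Submodule.span ℚ (incidence tailH headH '' {e | P (tailH e) ∧ P (headH e)})

variable {tailH headH P}

theorem single_sub_single_mem_inducedBoundaries_of_adj {a b : VH}
    (hab : inducedAdj tailH headH P a b) :
    Pi.single b 1 - Pi.single a 1 ∈ inducedBoundaries tailH headH P := by
  obtain ⟨ha, hb, e, ⟨rfl, rfl⟩ | ⟨rfl, rfl⟩⟩ := hab
  · rw [← incidence_row]
    exact Submodule.subset_span ⟨e, ⟨ha, hb⟩, rfl⟩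
  · rw [← neg_sub, ← incidence_row]
    exact Submodule.neg_mem _ (Submodule.subset_span ⟨e, ⟨hb, ha⟩, rfl⟩)

theorem single_sub_single_mem_inducedBoundaries_of_reflTransGen {a b : VH}
    (hab : ReflTransGen (inducedAdj tailH headH P) a b) :
    Pi.single b 1 - Pi.single a 1 ∈ inducedBoundaries tailH headH P := by
  induction hab with
  | refl => simp
  | @tail c b _ hcb hac =>
    rw [← sub_add_sub_cancel _ (Pi.single c 1)]
    exact Submodule.add_mem _ (single_sub_single_mem_inducedBoundaries_of_adj hcb) hac

theorem mem_inducedBoundaries_of_sum_eq_zero [Fintype VH]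
    (hconn : ∀ m n, P m → P n → ReflTransGen (inducedAdj tailH headH P) m n)
    {r : VH → ℚ} (hr : ∀ n, ¬P n → r n = 0) (hsum : ∑ n, r n = 0) :
    r ∈ inducedBoundaries tailH headH P := by
  by_cases hP : ∃ v, P v
  swap
  · push Not at hP
    rw [show r = 0 from funext fun n => hr n (hP n)]
    exact Submodule.zero_mem _
  obtain ⟨v, hv⟩ := hP
  have hr_eq : r = ∑ n, r n • (Pi.single n 1 - Pi.single v 1) := by
    ext m
    simp [Finset.sum_apply, Pi.single_apply, mul_sub, Finset.sum_sub_distrib, hsum]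
  rw [hr_eq]
  refine Submodule.sum_mem _ fun n _ => ?_
  by_cases hn : P n
  · exact Submodule.smul_mem _ _
      (single_sub_single_mem_inducedBoundaries_of_reflTransGen (hconn v n hv hn))
  · simp [hr n hn]

theorem exists_vecMul_incidence_eq_of_mem_inducedBoundaries [Fintype EH] {r : VH → ℚ}
    (hr : r ∈ inducedBoundaries tailH headH P) :
    ∃ f : EH → ℚ, (∀ e, ¬(P (tailH e) ∧ P (headH e)) → f e = 0) ∧
      f ᵥ* incidence tailH headH = r := by
  obtain ⟨l, hl, rfl⟩ := (Finsupp.mem_span_image_iff_linearCombination ℚ).mp hr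
  refine ⟨l, (Finsupp.mem_supported' ℚ l).mp hl, ?_⟩
  rw [vecMul_eq_sum]
  exact ((Finsupp.linearCombination_apply ℚ l).trans (Finsupp.sum_fintype _ _ (by simp))).symm

end InducedBoundaries

theorem incidence_mul_row {E V W : Type*} [Fintype V] [DecidableEq V]
    (tail head : E → V) (α : Matrix V W ℚ) (i : E) :
    (incidence tail head * α) i = α (head i) - α (tail i) := by
  rw [mul_apply_eq_vecMul, incidence_row, sub_vecMul, single_one_vecMul, single_one_vecMul]
  rfl

/-- sufficiency: if for every fine edge `i` the subgraph of the
coarse graph induced on `C̃_i` is connected, then for every admissible `α`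
there is a matrix `β`, supported on the sets `Ĩ_i`, with `Gʰ α = β Gᴴ`. -/
theorem exists_beta_of_connected {Eh Vh EH VH : Type*}
    [Fintype Vh] [DecidableEq Vh] [Fintype EH] [Fintype VH] [DecidableEq VH]
    (tail head : Eh → Vh) (tailH headH : EH → VH)
    (L : VH → Set Vh) (α : Matrix Vh VH ℚ)
    (hpart : ∀ p : Vh, ∑ n : VH, α p n = 1)
    (hsupp : ∀ (p : Vh) (n : VH), p ∉ L n → α p n = 0)
    (hconn : ∀ (i : Eh) (m n : VH),
      Ctil tail head L i m → Ctil tail head L i n →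
      Relation.ReflTransGen (inducedAdj tailH headH (Ctil tail head L i)) m n) :
    ∃ β : Matrix Eh EH ℚ,
      (∀ (i : Eh) (e : EH),
        ¬(Ctil tail head L i (tailH e) ∧ Ctil tail head L i (headH e)) → β i e = 0) ∧
      incidence tail head * α = β * incidence tailH headH := by
  have hrow : ∀ i, (incidence tail head * α) i ∈
      inducedBoundaries tailH headH (Ctil tail head L i) := by
    intro i
    rw [incidence_mul_row]
    refine mem_inducedBoundaries_of_sum_eq_zero (hconn i) (fun n hn => ?_) ?_
    · rw [Ctil, not_or] at hn
      simp [hsupp _ _ hn.1, hsupp _ _ hn.2]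
    · simp [Finset.sum_sub_distrib, hpart]
  choose β hβ hβrow using fun i => exists_vecMul_incidence_eq_of_mem_inducedBoundaries (hrow i)
  exact ⟨β, hβ, funext fun i => (hβrow i).symm⟩
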